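/- (Lemma 1) Under the assumption that there exist γ̄ > 0 and a target head classifier k̄ with R̂_{T,γ̄}(w*, k̄) ≤ R̂_T(w*, f_mp∘h*), for any γ ∈ [0, γ̄], the empirical margin risk of the optimal transferred head classifier k* satisfies R̂_{T,γ}(w*, k*) ≤ R̂_S(w*, h*) + 1 − MPA(T|S). -/

import Mathlib

open Finset

/-- The empirical margin risk R̂_{T,γ}(w,k), with `f i = k (w (x i))` the score vector. -/
noncomputable def marginRisk {n mT : ℕ} (t : Fin n → Fin mT) (f : Fin n → Fin mT → ℝ)
    (γ : ℝ) : ℝ :=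
  (n : ℝ)⁻¹ * ∑ i : Fin n,
    if h : ((Finset.univ : Finset (Fin mT)).erase (t i)).Nonempty then
      (if f i (t i) < γ + (((Finset.univ : Finset (Fin mT)).erase (t i)).sup' h (f i))
        then (1 : ℝ) else 0)
    else 0

theorem marginRisk_mono {n mT : ℕ} (t : Fin n → Fin mT) (f : Fin n → Fin mT → ℝ) :
    Monotone (marginRisk t f) := by
  intro γ γ' hγ
  unfold marginRisk
  gcongr with i
  split_ifs with _ hlt hlt' <;> try norm_num
  exact hlt' (hlt.trans_le (by linarith))

/- Union bound: if `f p` misses `t`, then `p` misses `s` or `f s` misses `t`; and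
`1 - 1[t = f s]` is the indicator of the latter. -/
theorem ite_ne_comp_le {α β : Type*} [DecidableEq α] [DecidableEq β]
    (f : α → β) (s p : α) (t : β) :
    (if t ≠ f p then (1 : ℝ) else 0)
      ≤ (if s ≠ p then 1 else 0) + 1 - (if t = f s then 1 else 0) := by
  by_cases hs : s = p
  · subst hs
    split_ifs <;> norm_num
  · split_ifs <;> norm_num

theorem inv_mul_sum_ite_ne_comp_le {α β : Type*} [DecidableEq α] [DecidableEq β] {n : ℕ}
    (f : α → β) (s p : Fin n → α) (t : Fin n → β) :
    (n : ℝ)⁻¹ * ∑ i, (if t i ≠ f (p i) then (1 : ℝ) else 0)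
      ≤ (n : ℝ)⁻¹ * ∑ i, (if s i ≠ p i then (1 : ℝ) else 0) + 1
        - (n : ℝ)⁻¹ * ∑ i, (if t i = f (s i) then (1 : ℝ) else 0) :=
  calc (n : ℝ)⁻¹ * ∑ i, (if t i ≠ f (p i) then (1 : ℝ) else 0)
      ≤ (n : ℝ)⁻¹ * ∑ i, ((if s i ≠ p i then (1 : ℝ) else 0) + 1
          - if t i = f (s i) then 1 else 0) := by
        gcongr with i
        exact ite_ne_comp_le f (s i) (p i) (t i)
    _ = (n : ℝ)⁻¹ * ∑ i, (if s i ≠ p i then (1 : ℝ) else 0) + (n : ℝ)⁻¹ * n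
          - (n : ℝ)⁻¹ * ∑ i, (if t i = f (s i) then (1 : ℝ) else 0) := by
        simp only [sum_sub_distrib, sum_add_distrib, sum_const, card_univ, Fintype.card_fin,
          nsmul_eq_mul, mul_one]
        ring
    _ ≤ _ := by
        gcongr
        exact inv_mul_le_one_of_le₀ le_rfl n.cast_nonneg

theorem lemma1_general {X F : Type*} {n mS mT : ℕ}
    (x : Fin n → X) (s : Fin n → Fin mS) (t : Fin n → Fin mT)
    (wstar : X → F) (hstar : F → Fin mS)
    -- f_mp is the majority predictor built from (s_i, t_i):
    (fmp : Fin mS → Fin mT)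
    -- the class of target head classifiers:
    (Ωk : Set (F → Fin mT → ℝ))
    -- Assumption 1: ∃ γ̄ > 0 and k̄ ∈ Ω_k with R̂_{T,γ̄}(w*,k̄) ≤ R̂_T(w*, f_mp ∘ h*):
    (γbar : ℝ) (kbar : F → Fin mT → ℝ) (hkbar : kbar ∈ Ωk)
    (hassm : marginRisk t (fun i => kbar (wstar (x i))) γbar
      ≤ (n : ℝ)⁻¹ * ∑ i : Fin n,
          (if t i ≠ fmp (hstar (wstar (x i))) then (1 : ℝ) else 0))
    -- the margin and the optimal transferred head classifier k* at margin γ: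
    (γ : ℝ) (hγ : γ ≤ γbar)
    (kstar : F → Fin mT → ℝ)
    (hmin : ∀ k ∈ Ωk, marginRisk t (fun i => kstar (wstar (x i))) γ
      ≤ marginRisk t (fun i => k (wstar (x i))) γ) :
    marginRisk t (fun i => kstar (wstar (x i))) γ
      ≤ (n : ℝ)⁻¹ * ∑ i : Fin n, (if s i ≠ hstar (wstar (x i)) then (1 : ℝ) else 0)
        + 1 - (n : ℝ)⁻¹ * ∑ i : Fin n, (if t i = fmp (s i) then (1 : ℝ) else 0) :=
  calc marginRisk t (fun i => kstar (wstar (x i))) γ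
      ≤ marginRisk t (fun i => kbar (wstar (x i))) γ := hmin kbar hkbar
    _ ≤ marginRisk t (fun i => kbar (wstar (x i))) γbar := marginRisk_mono _ _ hγ
    _ ≤ _ := hassm
    _ ≤ _ := inv_mul_sum_ite_ne_comp_le fmp s (fun i => hstar (wstar (x i))) t

/-- Lemma 1: under Assumption 1, for any γ ∈ [0, γ̄],
R̂_{T,γ}(w*, k*) ≤ R̂_S(w*, h*) + 1 − MPA(T|S). -/
theorem lemma1 {X F : Type*} {n mS mT : ℕ} (hn : 0 < n)
    (x : Fin n → X) (s : Fin n → Fin mS) (t : Fin n → Fin mT)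
    (wstar : X → F) (hstar : F → Fin mS)
    -- f_mp is the majority predictor built from (s_i, t_i):
    (fmp : Fin mS → Fin mT)
    (hfmp : ∀ a b, ((Finset.univ.filter (fun i => s i = a ∧ t i = b)).card : ℝ)
      ≤ ((Finset.univ.filter (fun i => s i = a ∧ t i = fmp a)).card : ℝ))
    -- the class of target head classifiers:
    (Ωk : Set (F → Fin mT → ℝ))
    -- Assumption 1: ∃ γ̄ > 0 and k̄ ∈ Ω_k with R̂_{T,γ̄}(w*,k̄) ≤ R̂_T(w*, f_mp ∘ h*):
    (γbar : ℝ) (hγbar : 0 < γbar) (kbar : F → Fin mT → ℝ) (hkbar : kbar ∈ Ωk)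
    (hassm : marginRisk t (fun i => kbar (wstar (x i))) γbar
      ≤ (n : ℝ)⁻¹ * ∑ i : Fin n,
          (if t i ≠ fmp (hstar (wstar (x i))) then (1 : ℝ) else 0))
    -- the margin and the optimal transferred head classifier k* at margin γ:
    (γ : ℝ) (hγ0 : 0 ≤ γ) (hγ : γ ≤ γbar)
    (kstar : F → Fin mT → ℝ) (hkstar : kstar ∈ Ωk)
    (hmin : ∀ k ∈ Ωk, marginRisk t (fun i => kstar (wstar (x i))) γ
      ≤ marginRisk t (fun i => k (wstar (x i))) γ) :
    marginRisk t (fun i => kstar (wstar (x i))) γ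
      ≤ (n : ℝ)⁻¹ * ∑ i : Fin n, (if s i ≠ hstar (wstar (x i)) then (1 : ℝ) else 0)
        + 1 - (n : ℝ)⁻¹ * ∑ i : Fin n, (if t i = fmp (s i) then (1 : ℝ) else 0) :=
  lemma1_general x s t wstar hstar fmp Ωk γbar kbar hkbar hassm γ hγ kstar hmin
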